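/- Let X and Y be Banach spaces that admit uniformly complemented copies of ℓ²_n for each n: there is a constant C ≥ 1 such that for every n there exist a bounded projection P_n on X with ‖P_n‖ ≤ C whose range is C-isomorphic to ℓ²_n, and similarly for Y. Then for every s-numbers sequence s and all 0<p<∞, 0<q≤∞, the inclusion of L^{(s)}_{p,q}(X,Y) into the approximable operators L^A(X,Y) is strict: there exists an approximable operator T ∈ L^A(X,Y) with T ∉ L^{(s)}_{p,q}(X,Y). -/

import Mathlib

open Filter Topology
open scoped ENNReal NNReal
open scoped Classical

noncomputable section

/-- An `s`-numbers sequence (s-numbers scale) in the sense of Pietsch: a rule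
assigning to every bounded operator between Banach spaces a non-increasing sequence
of non-negative reals, starting at the operator norm, additive and multiplicative in
the index, normalized on the identities of the Euclidean spaces `ℓ²_n`, and vanishing
on operators of small rank. Here `s X Y T n` represents `s_{n+1}(T)`. -/
structure SNumberScale where
  s : ∀ (X Y : Type) [NormedAddCommGroup X] [NormedSpace ℝ X] [CompleteSpace X]
      [NormedAddCommGroup Y] [NormedSpace ℝ Y] [CompleteSpace Y],
      (X →L[ℝ] Y) → ℕ → ℝ
  nonneg : ∀ (X Y : Type) [NormedAddCommGroup X] [NormedSpace ℝ X] [CompleteSpace X]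
      [NormedAddCommGroup Y] [NormedSpace ℝ Y] [CompleteSpace Y]
      (T : X →L[ℝ] Y) (n : ℕ), 0 ≤ s X Y T n
  antitone : ∀ (X Y : Type) [NormedAddCommGroup X] [NormedSpace ℝ X] [CompleteSpace X]
      [NormedAddCommGroup Y] [NormedSpace ℝ Y] [CompleteSpace Y]
      (T : X →L[ℝ] Y) (n : ℕ), s X Y T (n + 1) ≤ s X Y T n
  first_eq_norm : ∀ (X Y : Type) [NormedAddCommGroup X] [NormedSpace ℝ X]
      [CompleteSpace X] [NormedAddCommGroup Y] [NormedSpace ℝ Y] [CompleteSpace Y]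
      (T : X →L[ℝ] Y), s X Y T 0 = ‖T‖
  add_le : ∀ (X Y : Type) [NormedAddCommGroup X] [NormedSpace ℝ X] [CompleteSpace X]
      [NormedAddCommGroup Y] [NormedSpace ℝ Y] [CompleteSpace Y]
      (S T : X →L[ℝ] Y) (n m : ℕ),
      s X Y (S + T) (n + m) ≤ s X Y S n + s X Y T m
  comp_le : ∀ (X Y Z : Type) [NormedAddCommGroup X] [NormedSpace ℝ X] [CompleteSpace X]
      [NormedAddCommGroup Y] [NormedSpace ℝ Y] [CompleteSpace Y]
      [NormedAddCommGroup Z] [NormedSpace ℝ Z] [CompleteSpace Z]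
      (S : X →L[ℝ] Y) (T : Y →L[ℝ] Z) (n m : ℕ),
      s X Z (T.comp S) (n + m) ≤ s Y Z T n * s X Y S m
  id_euclidean : ∀ n : ℕ,
      s (EuclideanSpace ℝ (Fin (n + 1))) (EuclideanSpace ℝ (Fin (n + 1)))
        (ContinuousLinearMap.id ℝ (EuclideanSpace ℝ (Fin (n + 1)))) n = 1
  rank_small : ∀ (X Y : Type) [NormedAddCommGroup X] [NormedSpace ℝ X] [CompleteSpace X]
      [NormedAddCommGroup Y] [NormedSpace ℝ Y] [CompleteSpace Y]
      (T : X →L[ℝ] Y) (n : ℕ),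
      Module.rank ℝ (LinearMap.range (T : X →ₗ[ℝ] Y)) < ((n : Cardinal) + 1) → s X Y T n = 0

variable {X Y : Type*} [NormedAddCommGroup X] [NormedSpace ℝ X]
  [NormedAddCommGroup Y] [NormedSpace ℝ Y]

/-- An approximable operator: a member of the operator-norm closure of the
finite-rank operators. -/
def IsApproximable (T : X →L[ℝ] Y) : Prop :=
  T ∈ closure {R : X →L[ℝ] Y | FiniteDimensional ℝ (LinearMap.range (R : X →ₗ[ℝ] Y))}

/-- `X` admits, for each `n`, a `C`-complemented subspace `C`-isomorphic to `ℓ²_n`. -/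
def UnifComplEuclidean (C : ℝ) (X : Type*) [NormedAddCommGroup X] [NormedSpace ℝ X] :
    Prop :=
  ∀ n : ℕ, ∃ P : X →L[ℝ] X, P.comp P = P ∧ ‖P‖ ≤ C ∧
    ∃ u : ↥(LinearMap.range (P : X →ₗ[ℝ] X)) ≃L[ℝ] EuclideanSpace ℝ (Fin (n + 1)),
      ‖(u : ↥(LinearMap.range (P : X →ₗ[ℝ] X)) →L[ℝ] EuclideanSpace ℝ (Fin (n + 1)))‖ ≤ C ∧
      ‖(u.symm : EuclideanSpace ℝ (Fin (n + 1)) →L[ℝ] ↥(LinearMap.range (P : X →ₗ[ℝ] X)))‖ ≤ C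

/-- Membership in `L^{(s)}_{p,q}(X,Y)` for an s-numbers scale `σ`. -/
def memLs (σ : SNumberScale) (p : ℝ) (q : ℝ≥0∞)
    (X Y : Type) [NormedAddCommGroup X] [NormedSpace ℝ X] [CompleteSpace X]
    [NormedAddCommGroup Y] [NormedSpace ℝ Y] [CompleteSpace Y]
    (T : X →L[ℝ] Y) : Prop :=
  if q = ⊤ then ∃ M : ℝ, ∀ n : ℕ, ((n : ℝ) + 1) ^ (1/p) * σ.s X Y T n ≤ M
  else Summable (fun n : ℕ =>
    (((n : ℝ) + 1) ^ (1/p - 1/q.toReal) * σ.s X Y T n) ^ q.toReal)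

end

/-!
For every `n`, the complemented copies of `ℓ²_{n+1}` in `X` and `Y` give an operator
`B : X → Y` of rank at most `n + 1` with `‖B‖ ≤ C³` through which the identity of `ℓ²_{n+1}`
factors with constant `C³`, so that `s_{n+1}(B) ≥ C⁻³`. A gliding hump series
`T = ∑ ε ^ m • B_{d m}` with `ε = (4 C⁶)⁻¹` converges in norm, hence is approximable; if each
`d m` exceeds a prescribed position `N m` by the total rank of the earlier humps, then removing
those humps and the (small) tail shows `s_{N m + 1}(T) ≥ ε ^ m / (2 C³)`. Choosing `N m` large
makes `s_n(T)` decay slower than every power of `n`, while membership in `L^{(s)}_{p,q}` forces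
(by monotonicity of the s-numbers) a decay `s_n(T) = O(n^{-γ})` for some `γ > 0`.
-/

namespace SNumberScale

variable (σ : SNumberScale) {X Y : Type}
  [NormedAddCommGroup X] [NormedSpace ℝ X] [CompleteSpace X]
  [NormedAddCommGroup Y] [NormedSpace ℝ Y] [CompleteSpace Y]

theorem s_antitone (T : X →L[ℝ] Y) : Antitone (σ.s X Y T) :=
  antitone_nat_of_succ_le (σ.antitone X Y T)

theorem s_le_s_add_norm_sub (S T : X →L[ℝ] Y) (k : ℕ) :
    σ.s X Y S k ≤ σ.s X Y T k + ‖S - T‖ := by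
  simpa [σ.first_eq_norm] using σ.add_le X Y T (S - T) k 0

theorem s_add_le_of_rank_sub_lt {S T : X →L[ℝ] Y} {r : ℕ}
    (h : Module.rank ℝ (LinearMap.range ((T - S : X →L[ℝ] Y) : X →ₗ[ℝ] Y)) < r + 1) (k : ℕ) :
    σ.s X Y S (k + r) ≤ σ.s X Y T k := by
  have h0 : σ.s X Y (S - T) r = 0 := by
    refine σ.rank_small X Y _ r ?_
    rwa [← neg_sub, ContinuousLinearMap.toLinearMap_neg, LinearMap.range_neg]
  simpa [h0] using σ.add_le X Y T (S - T) k r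

theorem s_smul_le (c : ℝ) (T : X →L[ℝ] Y) (k : ℕ) :
    σ.s X Y (c • T) k ≤ |c| * σ.s X Y T k := by
  have h := σ.comp_le X Y Y T (c • ContinuousLinearMap.id ℝ Y) 0 k
  rw [ContinuousLinearMap.smul_comp, ContinuousLinearMap.id_comp, zero_add,
    σ.first_eq_norm] at h
  refine h.trans (mul_le_mul_of_nonneg_right ?_ (σ.nonneg X Y T k))
  calc ‖c • ContinuousLinearMap.id ℝ Y‖ ≤ ‖c‖ * ‖ContinuousLinearMap.id ℝ Y‖ :=
        ContinuousLinearMap.opNorm_smul_le _ _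
    _ ≤ |c| * 1 := by
      gcongr
      · exact (Real.norm_eq_abs c).le
      · exact ContinuousLinearMap.norm_id_le
    _ = |c| := mul_one _

theorem s_smul {c : ℝ} (hc : c ≠ 0) (T : X →L[ℝ] Y) (k : ℕ) :
    σ.s X Y (c • T) k = |c| * σ.s X Y T k := by
  refine (σ.s_smul_le c T k).antisymm ?_
  have h := σ.s_smul_le c⁻¹ (c • T) k
  rw [smul_smul, inv_mul_cancel₀ hc, one_smul, abs_inv] at h
  rwa [le_inv_mul_iff₀ (abs_pos.mpr hc)] at h

theorem one_le_norm_mul_s_mul_norm {n : ℕ} (A : Y →L[ℝ] EuclideanSpace ℝ (Fin (n + 1)))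
    (T : X →L[ℝ] Y) (B : EuclideanSpace ℝ (Fin (n + 1)) →L[ℝ] X)
    (h : A.comp (T.comp B) = ContinuousLinearMap.id ℝ _) :
    1 ≤ ‖A‖ * σ.s X Y T n * ‖B‖ := by
  have hA := σ.comp_le _ Y _ (T.comp B) A 0 n
  have hTB := σ.comp_le _ X Y B T n 0
  rw [h, zero_add, σ.id_euclidean, σ.first_eq_norm] at hA
  rw [add_zero, σ.first_eq_norm] at hTB
  calc (1 : ℝ) ≤ ‖A‖ * σ.s _ Y (T.comp B) n := hA
    _ ≤ ‖A‖ * (σ.s X Y T n * ‖B‖) := mul_le_mul_of_nonneg_left hTB (norm_nonneg A)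
    _ = ‖A‖ * σ.s X Y T n * ‖B‖ := (mul_assoc _ _ _).symm

theorem s_sub_norm_le_s_tsum {f : ℕ → X →L[ℝ] Y}
    (hf : Summable f) {m r : ℕ}
    (hrank : Module.rank ℝ (LinearMap.range ((∑ j ∈ Finset.range m, f j : X →L[ℝ] Y) :
      X →ₗ[ℝ] Y)) < r + 1) (k : ℕ) :
    σ.s X Y (f m) (k + r) - ‖∑' j, f (j + (m + 1))‖ ≤ σ.s X Y (∑' j, f j) k := by
  have hsplit : ∑' j, f j - (f m + ∑' j, f (j + (m + 1))) = ∑ j ∈ Finset.range m, f j := by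
    rw [← hf.sum_add_tsum_nat_add (m + 1), Finset.sum_range_succ]
    abel
  have hfinite := σ.s_add_le_of_rank_sub_lt (by rwa [hsplit]) k
  have htail := σ.s_le_s_add_norm_sub (f m) (f m + ∑' j, f (j + (m + 1))) (k + r)
  rw [sub_add_cancel_left, norm_neg] at htail
  linarith

end SNumberScale

theorem UnifComplEuclidean.exists_retraction {C : ℝ} {X : Type*} [NormedAddCommGroup X]
    [NormedSpace ℝ X] (hX : UnifComplEuclidean C X) (n : ℕ) :
    ∃ (J : EuclideanSpace ℝ (Fin (n + 1)) →L[ℝ] X) (Q : X →L[ℝ] EuclideanSpace ℝ (Fin (n + 1))),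
      Q.comp J = ContinuousLinearMap.id ℝ _ ∧ ‖J‖ ≤ C ∧ ‖Q‖ ≤ C * C := by
  obtain ⟨P, hPP, hP, u, hu, hu'⟩ := hX n
  have hC : 0 ≤ C := (ContinuousLinearMap.opNorm_nonneg _).trans hu
  obtain ⟨Pᵥ, hPᵥ⟩ : ∃ Pᵥ : X →L[ℝ] LinearMap.range (P : X →ₗ[ℝ] X), ∀ x, (Pᵥ x : X) = P x :=
    ⟨P.codRestrict _ (LinearMap.mem_range_self _), fun _ => rfl⟩
  have hPᵥ_norm : ‖Pᵥ‖ ≤ ‖P‖ :=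
    Pᵥ.opNorm_le_bound (norm_nonneg P) fun x => by rw [Submodule.coe_norm, hPᵥ]; exact P.le_opNorm x
  refine ⟨(LinearMap.range (P : X →ₗ[ℝ] X)).subtypeL.comp u.symm.toContinuousLinearMap,
    u.toContinuousLinearMap.comp Pᵥ, ?_, ?_, ?_⟩
  · ext1 z
    obtain ⟨x, hx⟩ := (u.symm z).2
    have hfix : Pᵥ (u.symm z) = u.symm z := by
      ext1
      rw [hPᵥ, ← hx]
      exact DFunLike.congr_fun hPP x
    simp only [ContinuousLinearMap.comp_apply, Submodule.subtypeL_apply,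
      ContinuousLinearEquiv.coe_coe, hfix, ContinuousLinearEquiv.apply_symm_apply,
      ContinuousLinearMap.id_apply]
  · calc _ ≤ _ := ContinuousLinearMap.opNorm_comp_le _ _
      _ ≤ 1 * C := mul_le_mul (Submodule.norm_subtypeL_le _) hu'
        (ContinuousLinearMap.opNorm_nonneg _) zero_le_one
      _ = C := one_mul C
  · calc _ ≤ _ := ContinuousLinearMap.opNorm_comp_le _ _
      _ ≤ C * C := mul_le_mul hu (hPᵥ_norm.trans hP) (ContinuousLinearMap.opNorm_nonneg _) hC

theorem exists_block (σ : SNumberScale) {C : ℝ} {X Y : Type}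
    [NormedAddCommGroup X] [NormedSpace ℝ X] [CompleteSpace X]
    [NormedAddCommGroup Y] [NormedSpace ℝ Y] [CompleteSpace Y]
    (hX : UnifComplEuclidean C X) (hY : UnifComplEuclidean C Y) (n : ℕ) :
    ∃ B : X →L[ℝ] Y, ‖B‖ ≤ C ^ 3 ∧
      Module.rank ℝ (LinearMap.range (B : X →ₗ[ℝ] Y)) ≤ (n + 1 : ℕ) ∧
      1 ≤ C ^ 3 * σ.s X Y B n := by
  obtain ⟨Jₓ, Qₓ, hQJₓ, hJₓ, hQₓ⟩ := hX.exists_retraction n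
  obtain ⟨Jᵧ, Qᵧ, hQJᵧ, hJᵧ, hQᵧ⟩ := hY.exists_retraction n
  have hC : 0 ≤ C := (norm_nonneg _).trans hJₓ
  refine ⟨Jᵧ.comp Qₓ, ?_, ?_, ?_⟩
  · calc _ ≤ ‖Jᵧ‖ * ‖Qₓ‖ := ContinuousLinearMap.opNorm_comp_le _ _
      _ ≤ C * (C * C) := by gcongr
      _ = C ^ 3 := by ring
  · calc _ ≤ LinearMap.rank (Jᵧ : _ →ₗ[ℝ] Y) := LinearMap.rank_comp_le_left _ _
      _ ≤ Module.rank ℝ (EuclideanSpace ℝ (Fin (n + 1))) := LinearMap.rank_le_domain _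
      _ = (n + 1 : ℕ) := by rw [← Module.finrank_eq_rank, finrank_euclideanSpace_fin]
  · have hid : Qᵧ.comp ((Jᵧ.comp Qₓ).comp Jₓ) = ContinuousLinearMap.id ℝ _ := by
      rw [← ContinuousLinearMap.comp_assoc, ← ContinuousLinearMap.comp_assoc, hQJᵧ,
        ContinuousLinearMap.id_comp, hQJₓ]
    calc (1 : ℝ) ≤ ‖Qᵧ‖ * σ.s X Y (Jᵧ.comp Qₓ) n * ‖Jₓ‖ := σ.one_le_norm_mul_s_mul_norm _ _ _ hid
      _ ≤ C * C * σ.s X Y (Jᵧ.comp Qₓ) n * C := by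
        have := σ.nonneg X Y (Jᵧ.comp Qₓ) n
        gcongr
      _ = C ^ 3 * σ.s X Y (Jᵧ.comp Qₓ) n := by ring

theorem norm_tsum_nat_add_le_of_norm_le_geometric {E : Type*} [NormedAddCommGroup E]
    {f : ℕ → E} {K ε : ℝ} (hε₀ : 0 ≤ ε) (hε₁ : ε < 1) (hf : ∀ j, ‖f j‖ ≤ K * ε ^ j) (m : ℕ) :
    ‖∑' j, f (j + m)‖ ≤ K * ε ^ m * (1 - ε)⁻¹ :=
  tsum_of_norm_bounded ((hasSum_geometric_of_lt_one hε₀ hε₁).mul_left (K * ε ^ m)) fun j => by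
    rw [mul_assoc, ← pow_add, add_comm]
    exact hf _

theorem rank_range_sum_smul_le {X Y ι : Type*} [NormedAddCommGroup X] [NormedSpace ℝ X]
    [NormedAddCommGroup Y] [NormedSpace ℝ Y] (s : Finset ι) (c : ι → ℝ) (B : ι → X →L[ℝ] Y)
    (d : ι → ℕ) (h : ∀ i ∈ s, Module.rank ℝ (LinearMap.range (B i : X →ₗ[ℝ] Y)) ≤ d i) :
    Module.rank ℝ (LinearMap.range ((∑ i ∈ s, c i • B i : X →L[ℝ] Y) : X →ₗ[ℝ] Y)) ≤
      (∑ i ∈ s, d i : ℕ) := by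
  rw [ContinuousLinearMap.toLinearMap_sum, Nat.cast_sum]
  refine (LinearMap.rank_finsetSum_le _ _).trans (Finset.sum_le_sum fun i hi => ?_)
  rw [ContinuousLinearMap.toLinearMap_smul]
  exact (Submodule.rank_mono (LinearMap.range_smul_le_range _ _)).trans (h i hi)

section GlidingHump

variable {X Y : Type} [NormedAddCommGroup X] [NormedSpace ℝ X] [CompleteSpace X]
  [NormedAddCommGroup Y] [NormedSpace ℝ Y] [CompleteSpace Y]

/-- The `m`-th hump is a block of dimension `humpOffset N m + N m + 1`, so that `humpOffset N m`
is the total rank of the humps before it. -/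
def humpOffset (N : ℕ → ℕ) : ℕ → ℕ
  | 0 => 0
  | m + 1 => humpOffset N m + (humpOffset N m + N m + 1)

theorem humpOffset_eq_sum (N : ℕ → ℕ) (m : ℕ) :
    humpOffset N m = ∑ j ∈ Finset.range m, (humpOffset N j + N j + 1) := by
  induction m with
  | zero => rfl
  | succ m ih => rw [Finset.sum_range_succ, ← ih]; rfl

theorem exists_pos_forall_exists_isApproximable_le_s (σ : SNumberScale) {K : ℝ}
    (hB : ∀ n, ∃ B : X →L[ℝ] Y, ‖B‖ ≤ K ∧
      Module.rank ℝ (LinearMap.range (B : X →ₗ[ℝ] Y)) ≤ (n + 1 : ℕ) ∧ 1 ≤ K * σ.s X Y B n) :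
    ∃ δ : ℕ → ℝ, (∀ m, 0 < δ m) ∧
      ∀ N : ℕ → ℕ, ∃ T : X →L[ℝ] Y, IsApproximable T ∧ ∀ m, δ m ≤ σ.s X Y T (N m) := by
  choose B hB_norm hB_rank hB_s using hB
  have hK : 1 ≤ K := by
    have h := hB_s 0
    rw [σ.first_eq_norm] at h
    nlinarith [hB_norm 0, norm_nonneg (B 0)]
  -- with this ratio the tail after the `m`-th hump costs at most half of its size `ε ^ m / K`
  set ε : ℝ := (4 * K ^ 2)⁻¹
  have hε₀ : 0 < ε := by positivity
  have hε : ε ≤ 1 / 2 := inv_le_of_inv_le₀ (by norm_num) (by nlinarith)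
  refine ⟨fun m => ε ^ m / (2 * K), fun m => by positivity, fun N => ?_⟩
  set f : ℕ → X →L[ℝ] Y := fun j => ε ^ j • B (humpOffset N j + N j)
  have hf_norm (j : ℕ) : ‖f j‖ ≤ K * ε ^ j := by
    rw [norm_smul, Real.norm_of_nonneg (by positivity), mul_comm]
    exact mul_le_mul_of_nonneg_right (hB_norm _) (by positivity)
  have hf : Summable f :=
    .of_norm_bounded ((summable_geometric_of_lt_one hε₀.le (by linarith)).mul_left K) hf_norm
  have hf_rank (m : ℕ) : Module.rank ℝ (LinearMap.range
      ((∑ j ∈ Finset.range m, f j : X →L[ℝ] Y) : X →ₗ[ℝ] Y)) ≤ humpOffset N m := by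
    rw [humpOffset_eq_sum]
    exact rank_range_sum_smul_le _ _ _ _ fun j _ => hB_rank _
  refine ⟨∑' j, f j, mem_closure_of_tendsto hf.hasSum.tendsto_sum_nat
    (.of_forall fun M => Module.rank_lt_aleph0_iff.mp
      ((hf_rank M).trans_lt Cardinal.natCast_lt_aleph0)), fun m => ?_⟩
  have hhump : ε ^ m / K ≤ σ.s X Y (f m) (N m + humpOffset N m) := by
    rw [σ.s_smul (pow_ne_zero m hε₀.ne'), abs_of_pos (pow_pos hε₀ m), add_comm,
      div_eq_mul_inv]
    exact mul_le_mul_of_nonneg_left ((inv_le_iff_one_le_mul₀' (by positivity)).mpr (hB_s _))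
      (by positivity)
  have htail : ‖∑' j, f (j + (m + 1))‖ ≤ ε ^ m / (2 * K) :=
    calc ‖∑' j, f (j + (m + 1))‖ ≤ K * ε ^ (m + 1) * (1 - ε)⁻¹ :=
          norm_tsum_nat_add_le_of_norm_le_geometric hε₀.le (by linarith) hf_norm (m + 1)
      _ = ε ^ m / (4 * K) * (1 - ε)⁻¹ := by
          rw [pow_succ]
          congr 1
          simp only [ε]
          field_simp
      _ ≤ ε ^ m / (4 * K) * 2 := by
          gcongr
          exact inv_le_of_inv_le₀ (by norm_num) (by linarith)
      _ = ε ^ m / (2 * K) := by ring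
  have hbound := σ.s_sub_norm_le_s_tsum hf
    ((hf_rank m).trans_lt (by exact_mod_cast Nat.lt_succ_self _)) (N m)
  have : ε ^ m / K = 2 * (ε ^ m / (2 * K)) := by field_simp
  linarith

end GlidingHump

theorem Antitone.exists_rpow_mul_le_of_summable {a : ℕ → ℝ} (ha : Antitone a)
    (ha₀ : ∀ n, 0 ≤ a n) {α r : ℝ} (hr : 0 < r) (hαr : 0 < 1 + α * r)
    (hs : Summable fun n : ℕ => (((n : ℝ) + 1) ^ α * a n) ^ r) :
    ∃ γ : ℝ, 0 < γ ∧ ∃ M : ℝ, ∀ N : ℕ, ((N : ℝ) + 1) ^ γ * a N ≤ M := by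
  set β := 1 + min (α * r) 0
  have hβ : 0 < β := by
    rcases le_total 0 (α * r) with h | h
    · simp only [β, min_eq_right h]; norm_num
    · simpa only [β, min_eq_left h] using hαr
  refine ⟨β * r⁻¹, by positivity, (∑' n : ℕ, (((n : ℝ) + 1) ^ α * a n) ^ r) ^ r⁻¹, fun N => ?_⟩
  have hN : (0 : ℝ) < N + 1 := by positivity
  have haN : 0 ≤ a N ^ r := Real.rpow_nonneg (ha₀ N) r
  have hterm : ∀ n ∈ Finset.range (N + 1),
      ((N : ℝ) + 1) ^ min (α * r) 0 * a N ^ r ≤ (((n : ℝ) + 1) ^ α * a n) ^ r := by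
    intro n hn
    have hnN : n ≤ N := Finset.mem_range_succ_iff.mp hn
    rw [Real.mul_rpow (by positivity) (ha₀ n), ← Real.rpow_mul (by positivity)]
    refine mul_le_mul ?_ (Real.rpow_le_rpow (ha₀ N) (ha hnN) hr.le) haN (by positivity)
    rcases le_total 0 (α * r) with h | h
    · rw [min_eq_right h, Real.rpow_zero]
      exact Real.one_le_rpow (by linarith [(n.cast_nonneg : (0 : ℝ) ≤ n)]) h
    · rw [min_eq_left h]
      exact Real.rpow_le_rpow_of_nonpos (by positivity) (by exact_mod_cast Nat.succ_le_succ hnN) h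
  have hsum : ((N : ℝ) + 1) ^ β * a N ^ r ≤ ∑' n : ℕ, (((n : ℝ) + 1) ^ α * a n) ^ r :=
    calc ((N : ℝ) + 1) ^ β * a N ^ r
        = ∑ n ∈ Finset.range (N + 1), ((N : ℝ) + 1) ^ min (α * r) 0 * a N ^ r := by
          rw [Finset.sum_const, Finset.card_range, nsmul_eq_mul, Real.rpow_add hN, Real.rpow_one]
          push_cast
          ring
      _ ≤ ∑ n ∈ Finset.range (N + 1), (((n : ℝ) + 1) ^ α * a n) ^ r := Finset.sum_le_sum hterm
      _ ≤ _ := hs.sum_le_tsum _ fun n _ => Real.rpow_nonneg (mul_nonneg (by positivity) (ha₀ n)) r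
  calc ((N : ℝ) + 1) ^ (β * r⁻¹) * a N = (((N : ℝ) + 1) ^ β * a N ^ r) ^ r⁻¹ := by
        rw [Real.mul_rpow (by positivity) haN, ← Real.rpow_mul hN.le,
          Real.rpow_rpow_inv (ha₀ N) hr.ne']
    _ ≤ _ := Real.rpow_le_rpow (by positivity) hsum (by positivity)

theorem memLs.exists_rpow_mul_s_le {σ : SNumberScale} {p : ℝ} {q : ℝ≥0∞} {X Y : Type}
    [NormedAddCommGroup X] [NormedSpace ℝ X] [CompleteSpace X]
    [NormedAddCommGroup Y] [NormedSpace ℝ Y] [CompleteSpace Y] {T : X →L[ℝ] Y}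
    (hp : 0 < p) (hq : 0 < q) (h : memLs σ p q X Y T) :
    ∃ γ : ℝ, 0 < γ ∧ ∃ M : ℝ, ∀ N : ℕ, ((N : ℝ) + 1) ^ γ * σ.s X Y T N ≤ M := by
  unfold memLs at h
  split_ifs at h with hq_top
  · exact ⟨1 / p, by positivity, h⟩
  · have hq' : 0 < q.toReal := ENNReal.toReal_pos hq.ne' hq_top
    have hexp : 1 + (1 / p - 1 / q.toReal) * q.toReal = q.toReal / p := by field_simp; ring
    exact (σ.s_antitone T).exists_rpow_mul_le_of_summable (σ.nonneg X Y T) hq'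
      (by rw [hexp]; positivity) h

theorem exists_seq_forall_exists_lt_rpow_mul {δ : ℕ → ℝ} (hδ : ∀ m, 0 < δ m) :
    ∃ N : ℕ → ℕ, ∀ γ : ℝ, 0 < γ → ∀ M : ℝ, ∃ m, M < ((N m : ℝ) + 1) ^ γ * δ m := by
  refine ⟨fun m => ⌈((m + 1) / δ m) ^ (m + 1)⌉₊, fun γ hγ M => ?_⟩
  obtain ⟨m, hmγ, hmM⟩ : ∃ m : ℕ, ((m : ℝ) + 1)⁻¹ ≤ γ ∧ M < m + 1 := by
    refine ⟨⌈γ⁻¹⌉₊ + ⌈M⌉₊, ?_, ?_⟩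
    · rw [inv_le_comm₀ (by positivity) hγ]
      push_cast
      linarith [Nat.le_ceil γ⁻¹, (⌈M⌉₊.cast_nonneg : (0 : ℝ) ≤ ⌈M⌉₊)]
    · push_cast
      linarith [Nat.le_ceil M, (⌈γ⁻¹⌉₊.cast_nonneg : (0 : ℝ) ≤ ⌈γ⁻¹⌉₊)]
  refine ⟨m, ?_⟩
  set x : ℝ := (m + 1) / δ m
  have hx : 0 ≤ x := div_nonneg (by positivity) (hδ m).le
  have hceil : x ^ (m + 1) ≤ (⌈x ^ (m + 1)⌉₊ : ℝ) + 1 := (Nat.le_ceil _).trans (by linarith)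
  calc M < m + 1 := hmM
    _ = (x ^ (m + 1)) ^ ((m + 1 : ℕ) : ℝ)⁻¹ * δ m := by
      rw [Real.pow_rpow_inv_natCast hx (Nat.succ_ne_zero m), div_mul_cancel₀ _ (hδ m).ne']
    _ ≤ ((⌈x ^ (m + 1)⌉₊ : ℝ) + 1) ^ ((m + 1 : ℕ) : ℝ)⁻¹ * δ m := by
      gcongr
      exact (hδ m).le
    _ ≤ ((⌈x ^ (m + 1)⌉₊ : ℝ) + 1) ^ γ * δ m := by
      gcongr
      · exact (hδ m).le
      · exact le_add_of_nonneg_left (Nat.cast_nonneg _)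
      · push_cast; exact hmγ

theorem stmt17_general (X Y : Type) [NormedAddCommGroup X] [NormedSpace ℝ X] [CompleteSpace X]
    [NormedAddCommGroup Y] [NormedSpace ℝ Y] [CompleteSpace Y]
    (C : ℝ) (hX : UnifComplEuclidean C X) (hY : UnifComplEuclidean C Y)
    (σ : SNumberScale) (p : ℝ) (hp : 0 < p) (q : ℝ≥0∞) (hq : 0 < q) :
    ∃ T : X →L[ℝ] Y, IsApproximable T ∧ ¬ memLs σ p q X Y T := by
  obtain ⟨δ, hδ, hT⟩ := exists_pos_forall_exists_isApproximable_le_s σ (exists_block σ hX hY)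
  obtain ⟨N, hN⟩ := exists_seq_forall_exists_lt_rpow_mul hδ
  obtain ⟨T, hT_approx, hT_s⟩ := hT N
  refine ⟨T, hT_approx, fun hmem => ?_⟩
  obtain ⟨γ, hγ, M, hM⟩ := hmem.exists_rpow_mul_s_le hp hq
  obtain ⟨m, hm⟩ := hN γ hγ M
  exact hm.not_ge ((mul_le_mul_of_nonneg_left (hT_s m) (by positivity)).trans (hM (N m)))

/-- Let `X, Y` be Banach spaces admitting uniformly complemented
copies of `ℓ²_n` for each `n`. Then for every s-numbers sequence `s`, every `0<p<∞`
and `0<q≤∞`, the inclusion `L^{(s)}_{p,q}(X,Y) ⊆ L^A(X,Y)` is strict: there is an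
approximable operator `T` with `T ∉ L^{(s)}_{p,q}(X,Y)`. -/
theorem stmt17 (X Y : Type) [NormedAddCommGroup X] [NormedSpace ℝ X] [CompleteSpace X]
    [NormedAddCommGroup Y] [NormedSpace ℝ Y] [CompleteSpace Y]
    (C : ℝ) (hC : 1 ≤ C) (hX : UnifComplEuclidean C X) (hY : UnifComplEuclidean C Y)
    (σ : SNumberScale) (p : ℝ) (hp : 0 < p) (q : ℝ≥0∞) (hq : 0 < q) :
    ∃ T : X →L[ℝ] Y, IsApproximable T ∧ ¬ memLs σ p q X Y T :=
  stmt17_general X Y C hX hY σ p hp q hq
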